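/- arXiv:2011.01657 — 3 statements merged into one kernel-verified Lean document; each statement's English description precedes it below -/
import Mathlib

section
/- Let a, b, y₀ be positive real numbers and let y ∈ [y₀, 1]. Then ∫₀^y √(a + b·log(1/u)) du ≤ (1 + b/(2a)) · y · √(a + b·log(1/y₀)). -/
open MeasureTheory Set Filter Topology Real

private lemma sqrt_add_le' (x y : ℝ) (hx : 0 ≤ x) (hy : 0 ≤ y) :
    Real.sqrt (x + y) ≤ Real.sqrt x + Real.sqrt y := by
  rw [show Real.sqrt x + Real.sqrt y = Real.sqrt ((Real.sqrt x + Real.sqrt y) ^ 2) from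
    (Real.sqrt_sq (by positivity)).symm]
  apply Real.sqrt_le_sqrt
  nlinarith [Real.sq_sqrt hx, Real.sq_sqrt hy, Real.sqrt_nonneg x, Real.sqrt_nonneg y]

private lemma sqrt_le_one_add (x : ℝ) (hx : 0 ≤ x) : Real.sqrt x ≤ 1 + x := by
  nlinarith [Real.sq_sqrt hx, Real.sqrt_nonneg x, sq_nonneg (Real.sqrt x - 1)]

/-- For `a, b, y₀ > 0` and `y ∈ [y₀, 1]`,
`∫₀^y √(a + b log(1/u)) du ≤ (1 + b/(2a)) y √(a + b log(1/y₀))`. -/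
theorem stmt_3 (a b y₀ y : ℝ) (ha : 0 < a) (hb : 0 < b) (hy₀ : 0 < y₀)
    (hy : y ∈ Set.Icc y₀ 1) :
    ∫ u in (0:ℝ)..y, Real.sqrt (a + b * Real.log (1 / u))
      ≤ (1 + b / (2 * a)) * y * Real.sqrt (a + b * Real.log (1 / y₀)) := by
  obtain ⟨hy₀y, hy1⟩ := hy
  have hy0 : 0 < y := hy₀.trans_le hy₀y
  have hrw : ∀ u : ℝ, a + b * Real.log (1 / u) = a - b * Real.log u := by
    intro u; rw [one_div, Real.log_inv]; ring
  simp only [hrw]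
  have hsa : 0 < Real.sqrt a := Real.sqrt_pos.mpr ha
  set c : ℝ := b / (2 * Real.sqrt a) with hc
  have hc0 : 0 < c := by positivity
  set f : ℝ → ℝ := fun u => Real.sqrt (a - b * Real.log u) with hf
  set F' : ℝ → ℝ := fun u => f u - b / (2 * f u) + c with hF'
  set F : ℝ → ℝ := fun u => u * f u + c * u with hF
  -- lower bound for f on (0,1]
  have hfl : ∀ u : ℝ, 0 < u → u ≤ 1 → Real.sqrt a ≤ f u := by
    intro u hu hu1
    apply Real.sqrt_le_sqrt
    nlinarith [Real.log_nonpos hu.le hu1]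
  -- measurability of f
  have hfm : Measurable f := by
    apply Real.continuous_sqrt.measurable.comp
    exact measurable_const.sub (measurable_const.mul Real.measurable_log)
  -- integrability of f on [0, y]
  have hfint : IntervalIntegrable f volume 0 y := by
    have hg : IntervalIntegrable (fun u : ℝ => Real.sqrt a + Real.sqrt b * u ^ (-(1/2) : ℝ))
        volume 0 y :=
      intervalIntegrable_const.add ((intervalIntegral.intervalIntegrable_rpow' (by norm_num)).const_mul _)
    apply hg.mono_fun' hfm.aestronglyMeasurable
    filter_upwards [ae_restrict_mem measurableSet_uIoc] with u hu
    rw [Set.uIoc_of_le hy0.le] at hu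
    obtain ⟨hu0, huy⟩ := hu
    have hu1 : u ≤ 1 := huy.trans hy1
    have hlog0 : 0 ≤ -Real.log u := by nlinarith [Real.log_nonpos hu0.le hu1]
    have hlogle : -Real.log u ≤ u⁻¹ := by
      have h := Real.log_le_sub_one_of_pos (show (0:ℝ) < u⁻¹ by positivity)
      rw [Real.log_inv] at h
      nlinarith [h, (show (0:ℝ) < u⁻¹ by positivity)]
    have h1 : f u ≤ Real.sqrt a + Real.sqrt b * Real.sqrt (-Real.log u) := by
      have h := sqrt_add_le' a (b * (-Real.log u)) ha.le (by positivity)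
      rw [Real.sqrt_mul hb.le] at h
      simpa [hf, sub_eq_add_neg, mul_neg] using h
    have h2 : Real.sqrt (-Real.log u) ≤ u ^ (-(1/2) : ℝ) := by
      rw [Real.rpow_neg hu0.le, ← Real.sqrt_eq_rpow, ← Real.sqrt_inv]
      exact Real.sqrt_le_sqrt hlogle
    have hfnn : 0 ≤ f u := Real.sqrt_nonneg _
    simp only [Real.norm_eq_abs, abs_of_nonneg hfnn]
    nlinarith [Real.sqrt_nonneg b, Real.sqrt_nonneg (-Real.log u)]
  -- integrability of F'
  have hF'int : IntervalIntegrable F' volume 0 y := by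
    have hq : IntervalIntegrable (fun u : ℝ => b / (2 * f u)) volume 0 y := by
      have hqm : Measurable fun u : ℝ => b / (2 * f u) :=
        measurable_const.div (measurable_const.mul hfm)
      apply (intervalIntegrable_const (c := c)).mono_fun' hqm.aestronglyMeasurable
      filter_upwards [ae_restrict_mem measurableSet_uIoc] with u hu
      rw [Set.uIoc_of_le hy0.le] at hu
      have hfu : Real.sqrt a ≤ f u := hfl u hu.1 (hu.2.trans hy1)
      have hfu0 : 0 < f u := lt_of_lt_of_le hsa hfu
      have : b / (2 * f u) ≤ c := by
        rw [hc, div_le_div_iff₀ (by positivity) (by positivity)]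
        nlinarith
      simp only [Real.norm_eq_abs, abs_of_nonneg (by positivity : (0:ℝ) ≤ b / (2 * f u))]
      exact this
    exact (hfint.sub hq).add intervalIntegrable_const
  -- pointwise: f ≤ F' on [0, y]
  have hpt : ∀ u ∈ Set.Icc (0:ℝ) y, f u ≤ F' u := by
    intro u hu
    rcases eq_or_lt_of_le hu.1 with h0 | h0
    · simp only [hF', hf, ← h0, Real.log_zero]
      have : Real.sqrt (a - b * 0) = Real.sqrt a := by norm_num
      rw [this]
      have : b / (2 * Real.sqrt a) = c := rfl
      nlinarith [this]
    · have hfu : Real.sqrt a ≤ f u := hfl u h0 (hu.2.trans hy1)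
      have hfu0 : 0 < f u := lt_of_lt_of_le hsa hfu
      have hd : b / (2 * f u) ≤ c := by
        rw [hc, div_le_div_iff₀ (by positivity) (by positivity)]
        nlinarith
      simp only [hF']
      linarith
  -- derivative of F on (0, y)
  have hderiv : ∀ x ∈ Set.Ioo (0:ℝ) y, HasDerivAt F (F' x) x := by
    intro x hx
    have hx0 : 0 < x := hx.1
    have hhx : 0 < a - b * Real.log x := by
      nlinarith [Real.log_nonpos hx0.le (hx.2.le.trans hy1)]
    have hfx : 0 < f x := Real.sqrt_pos.mpr hhx
    have h1 : HasDerivAt (fun u : ℝ => a - b * Real.log u) (-(b * x⁻¹)) x :=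
      ((Real.hasDerivAt_log hx0.ne').const_mul b).const_sub a
    have h2 : HasDerivAt f (-(b * x⁻¹) / (2 * f x)) x := h1.sqrt hhx.ne'
    have h3 : HasDerivAt (fun u : ℝ => u * f u)
        (1 * f x + x * (-(b * x⁻¹) / (2 * f x))) x := (hasDerivAt_id x).mul h2
    have h4 : HasDerivAt F (1 * f x + x * (-(b * x⁻¹) / (2 * f x)) + c * 1) x :=
      h3.add ((hasDerivAt_id x).const_mul c)
    convert h4 using 1
    simp only [hF']
    field_simp
    ring
  -- F tends to 0 at 0⁺
  have hF0 : Tendsto F (𝓝[>] (0:ℝ)) (𝓝 0) := by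
    set U : ℝ → ℝ := fun u => u * (Real.sqrt a + Real.sqrt b + c) - Real.sqrt b * (Real.log u * u)
      with hU
    have hUlim : Tendsto U (𝓝[>] (0:ℝ)) (𝓝 0) := by
      have h1 : Tendsto (fun u : ℝ => Real.log u * u) (𝓝[>] (0:ℝ)) (𝓝 0) := by
        have := tendsto_log_mul_rpow_nhdsGT_zero one_pos
        simpa [Real.rpow_one] using this
      have h2 : Tendsto (fun u : ℝ => u * (Real.sqrt a + Real.sqrt b + c))
          (𝓝[>] (0:ℝ)) (𝓝 0) := by
        have := (tendsto_id.mono_left nhdsWithin_le_nhds :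
          Tendsto id (𝓝[>] (0:ℝ)) (𝓝 0)).mul_const (Real.sqrt a + Real.sqrt b + c)
        simpa using this
      simpa using h2.sub (h1.const_mul (Real.sqrt b))
    apply tendsto_of_tendsto_of_tendsto_of_le_of_le' tendsto_const_nhds hUlim
    · filter_upwards [self_mem_nhdsWithin] with u hu
      have hu0 : 0 < u := hu
      have : 0 ≤ f u := Real.sqrt_nonneg _
      simp only [hF]
      nlinarith
    · have hmem : Set.Ioo (0:ℝ) 1 ∈ 𝓝[>] (0:ℝ) :=
        inter_mem_nhdsWithin _ (Iio_mem_nhds one_pos)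
      filter_upwards [hmem] with u hu
      obtain ⟨hu0, hu1⟩ := hu
      have hlog0 : 0 ≤ -Real.log u := by nlinarith [Real.log_nonpos hu0.le hu1.le]
      have h1 : f u ≤ Real.sqrt a + Real.sqrt b * Real.sqrt (-Real.log u) := by
        have h := sqrt_add_le' a (b * (-Real.log u)) ha.le (by positivity)
        rw [Real.sqrt_mul hb.le] at h
        simpa [hf, sub_eq_add_neg, mul_neg] using h
      have h2 : Real.sqrt (-Real.log u) ≤ 1 + -Real.log u := sqrt_le_one_add _ hlog0
      have hsb : 0 ≤ Real.sqrt b := Real.sqrt_nonneg b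
      simp only [hF, hU]
      nlinarith [mul_le_mul_of_nonneg_left h1 hu0.le,
        mul_le_mul_of_nonneg_left h2 (by positivity : (0:ℝ) ≤ Real.sqrt b * u)]
  -- F tends to F y at y⁻
  have hFy : Tendsto F (𝓝[<] y) (𝓝 (F y)) := by
    have hcont : ContinuousAt F y := by
      have hlogc : ContinuousAt (fun u : ℝ => a - b * Real.log u) y :=
        continuousAt_const.sub (continuousAt_const.mul (Real.continuousAt_log hy0.ne'))
      exact (continuousAt_id.mul (Real.continuous_sqrt.continuousAt.comp hlogc)).add
        (continuousAt_const.mul continuousAt_id)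
    exact hcont.tendsto.mono_left nhdsWithin_le_nhds
  -- FTC
  have key : ∫ u in (0:ℝ)..y, F' u = F y - 0 :=
    intervalIntegral.integral_eq_sub_of_hasDerivAt_of_tendsto hy0 hderiv hF'int hF0 hFy
  have hmono : ∫ u in (0:ℝ)..y, f u ≤ ∫ u in (0:ℝ)..y, F' u :=
    intervalIntegral.integral_mono_on hy0.le hfint hF'int hpt
  -- final bound
  have hfyS : f y ≤ Real.sqrt (a - b * Real.log y₀) := by
    apply Real.sqrt_le_sqrt
    nlinarith [Real.log_le_log hy₀ hy₀y]
  have haS : Real.sqrt a ≤ Real.sqrt (a - b * Real.log y₀) := by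
    apply Real.sqrt_le_sqrt
    nlinarith [Real.log_nonpos hy₀.le (hy₀y.trans hy1)]
  have hSa : Real.sqrt a * Real.sqrt a = a := Real.mul_self_sqrt ha.le
  have hcy : c * y ≤ b / (2 * a) * y * Real.sqrt (a - b * Real.log y₀) := by
    have hceq : c = b / (2 * a) * Real.sqrt a := by
      rw [hc, div_mul_eq_mul_div, div_eq_div_iff (by positivity) (by positivity)]
      nlinarith
    rw [hceq]
    have : b / (2 * a) * Real.sqrt a ≤ b / (2 * a) * Real.sqrt (a - b * Real.log y₀) := by
      apply mul_le_mul_of_nonneg_left haS (by positivity)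
      
    nlinarith [this, hy0.le]
  calc ∫ u in (0:ℝ)..y, f u ≤ F y - 0 := by rw [← key]; exact hmono
    _ = y * f y + c * y := by simp [hF]
    _ ≤ y * Real.sqrt (a - b * Real.log y₀) + b / (2 * a) * y * Real.sqrt (a - b * Real.log y₀) := by
        have := mul_le_mul_of_nonneg_left hfyS hy0.le
        linarith
    _ = (1 + b / (2 * a)) * y * Real.sqrt (a - b * Real.log y₀) := by ring
end

section
/- Let g : ℝ → ℝ be a 1-Lipschitz function vanishing outside [0,1], let N be a positive integer, L > 0, α ∈ (0,1], M > 0, and ε ∈ {-1,1}^{2^N}. Define G_ε(x) = L·∑_{k=0}^{2^N - 1} ε_{k+1}·g(2^N·x - k) for x ∈ [0,1]. If L ≤ 2^{-((N-1)α + 1)}·M, then |G_ε(x) - G_ε(y)| ≤ M·|x - y|^α for all x, y ∈ [0,1]. -/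
/-- If `g` is 1-Lipschitz and vanishes outside `[0,1]`, and
`G_ε(x) = L ∑_{k<2^N} ε_{k+1} g(2^N x - k)` with signs `ε`,
then `G_ε` is `α`-Hölder with constant `M` on `[0,1]` provided
`L ≤ 2^{-((N-1)α + 1)} M`. -/
theorem stmt_5 (g : ℝ → ℝ) (hgLip : LipschitzWith 1 g)
    (hgsupp : ∀ x, x ∉ Set.Icc (0:ℝ) 1 → g x = 0)
    (N : ℕ) (hN : 0 < N) (L : ℝ) (hL : 0 < L)
    (α : ℝ) (hα : α ∈ Set.Ioc (0:ℝ) 1) (M : ℝ) (hM : 0 < M)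
    (ε : Fin (2 ^ N) → ℝ) (hε : ∀ k, ε k = 1 ∨ ε k = -1)
    (G : ℝ → ℝ)
    (hG : ∀ x, G x = L * ∑ k : Fin (2 ^ N), ε k * g (2 ^ N * x - k))
    (hLM : L ≤ (2:ℝ) ^ (-(((N:ℝ) - 1) * α + 1)) * M) :
    ∀ x ∈ Set.Icc (0:ℝ) 1, ∀ y ∈ Set.Icc (0:ℝ) 1,
      |G x - G y| ≤ M * |x - y| ^ α := by
  classical
  obtain ⟨hα0, hα1⟩ := hα
  -- real form of the Lipschitz condition
  have hgl : ∀ a b : ℝ, |g a - g b| ≤ |a - b| := by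
    intro a b
    have := hgLip.dist_le_mul a b
    simpa [Real.dist_eq] using this
  -- g vanishes at 0 and 1 by continuity
  have hg0 : g 0 = 0 := by
    have h : ∀ δ : ℝ, 0 < δ → |g 0| ≤ δ := by
      intro δ hδ
      have h1 : g (-δ) = 0 := by
        apply hgsupp
        intro hc
        have := hc.1
        simp only [Set.mem_Icc] at hc
        linarith [hc.1]
      have h2 := hgl 0 (-δ)
      rw [h1] at h2
      simpa [abs_of_pos hδ] using h2
    have : |g 0| ≤ 0 := le_of_forall_pos_le_add (by intro δ hδ; simpa using h δ hδ)
    exact abs_nonpos_iff.mp this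
  have hg1 : g 1 = 0 := by
    have h : ∀ δ : ℝ, 0 < δ → |g 1| ≤ δ := by
      intro δ hδ
      have h1 : g (1 + δ) = 0 := by
        apply hgsupp
        intro hc
        simp only [Set.mem_Icc] at hc
        linarith [hc.2]
      have h2 := hgl 1 (1 + δ)
      rw [h1] at h2
      simpa [abs_of_pos hδ, abs_sub_comm] using h2
    have : |g 1| ≤ 0 := le_of_forall_pos_le_add (by intro δ hδ; simpa using h δ hδ)
    exact abs_nonpos_iff.mp this
  -- g vanishes on (-∞,0] ∪ [1,∞)
  have hgz : ∀ a : ℝ, a ≤ 0 ∨ 1 ≤ a → g a = 0 := by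
    intro a ha
    rcases ha with ha | ha
    · rcases eq_or_lt_of_le ha with h | h
      · rw [h]; exact hg0
      · apply hgsupp; intro hc; simp only [Set.mem_Icc] at hc; linarith [hc.1]
    · rcases eq_or_lt_of_le ha with h | h
      · rw [← h]; exact hg1
      · apply hgsupp; intro hc; simp only [Set.mem_Icc] at hc; linarith [hc.2]
  -- g is bounded by 1/2
  have hgbd : ∀ a : ℝ, |g a| ≤ 1 / 2 := by
    intro a
    rcases le_or_gt a 0 with h | h
    · rw [hgz a (Or.inl h)]; norm_num
    rcases le_or_gt 1 a with h' | h'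
    · rw [hgz a (Or.inr h')]; norm_num
    rcases le_or_gt a (1 / 2) with h2 | h2
    · have := hgl a 0
      rw [hg0] at this
      simp only [sub_zero] at this
      calc |g a| ≤ |a| := this
        _ ≤ 1 / 2 := by rw [abs_of_pos h]; exact h2
    · have := hgl a 1
      rw [hg1] at this
      simp only [sub_zero] at this
      calc |g a| ≤ |a - 1| := this
        _ ≤ 1 / 2 := by rw [abs_of_neg (by linarith)]; linarith
  have hεabs : ∀ k, |ε k| = 1 := by
    intro k; rcases hε k with h | h <;> simp [h]
  -- sums of functions supported at a single index
  have hsum : ∀ (c : ℝ) (m : ℤ) (f : Fin (2 ^ N) → ℝ), 0 ≤ c →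
      (∀ k : Fin (2 ^ N), |f k| ≤ if (k : ℤ) = m then c else 0) →
      |∑ k, f k| ≤ c := by
    intro c m f hc hf
    calc |∑ k, f k| ≤ ∑ k, |f k| := Finset.abs_sum_le_sum_abs _ _
      _ ≤ ∑ k : Fin (2 ^ N), (if (k : ℤ) = m then c else 0) :=
          Finset.sum_le_sum (fun k _ => hf k)
      _ ≤ c := by
        by_cases hm : ∃ k₀ : Fin (2 ^ N), (k₀ : ℤ) = m
        · obtain ⟨k₀, hk₀⟩ := hm
          have he : ∀ k : Fin (2 ^ N), ((k : ℤ) = m) ↔ (k = k₀) := by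
            intro k
            constructor
            · intro h
              have : (k : ℤ) = (k₀ : ℤ) := by rw [h, hk₀]
              exact Fin.ext (by exact_mod_cast this)
            · intro h; rw [h, hk₀]
          simp only [he]
          rw [Finset.sum_ite_eq' Finset.univ k₀ (fun _ => c)]
          simp
        · push_neg at hm
          rw [Finset.sum_eq_zero (fun k _ => by simp [hm k])]
          exact hc
  -- the unscaled sum
  set T : ℝ → ℝ := fun u => ∑ k : Fin (2 ^ N), ε k * g (u - (k : ℕ)) with hTdef
  have hGT : ∀ x : ℝ, G x = L * T ((2 : ℝ) ^ N * x) := by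
    intro x; rw [hG x]
  -- T is bounded by 1/2
  have hTbd : ∀ u : ℝ, |T u| ≤ 1 / 2 := by
    intro u
    apply hsum (1 / 2) ⌊u⌋ _ (by norm_num)
    intro k
    rw [abs_mul, hεabs, one_mul]
    split_ifs with h
    · exact hgbd _
    · rcases lt_or_gt_of_ne h with h' | h'
      · have h1 : ((k : ℤ) : ℝ) + 1 ≤ (⌊u⌋ : ℝ) := by
          exact_mod_cast Int.add_one_le_iff.mpr h'
        have h2 : (⌊u⌋ : ℝ) ≤ u := Int.floor_le u
        have : (1 : ℝ) ≤ u - (k : ℕ) := by push_cast at h1 ⊢; linarith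
        rw [hgz _ (Or.inr this)]; simp
      · have h1 : (⌊u⌋ : ℝ) + 1 ≤ ((k : ℤ) : ℝ) := by
          exact_mod_cast Int.add_one_le_iff.mpr h'
        have h2 : u < (⌊u⌋ : ℝ) + 1 := Int.lt_floor_add_one u
        have : u - (k : ℕ) ≤ 0 := by push_cast at h1 ⊢; linarith
        rw [hgz _ (Or.inl this)]; simp
  -- T is 1-Lipschitz within each cell [m, m+1]
  have hTcell : ∀ (m : ℤ) (u v : ℝ), (m : ℝ) ≤ u → u ≤ (m : ℝ) + 1 →
      (m : ℝ) ≤ v → v ≤ (m : ℝ) + 1 → |T u - T v| ≤ |u - v| := by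
    intro m u v h1 h2 h3 h4
    have hd : T u - T v = ∑ k : Fin (2 ^ N), (ε k * g (u - (k : ℕ)) - ε k * g (v - (k : ℕ))) := by
      rw [hTdef]; rw [Finset.sum_sub_distrib]
    rw [hd]
    apply hsum _ m _ (abs_nonneg _)
    intro k
    rw [← mul_sub, abs_mul, hεabs, one_mul]
    split_ifs with h
    · calc |g (u - (k : ℕ)) - g (v - (k : ℕ))| ≤ |(u - (k : ℕ)) - (v - (k : ℕ))| := hgl _ _
        _ = |u - v| := by ring_nf
    · rcases lt_or_gt_of_ne h with h' | h'
      · have hk : ((k : ℤ) : ℝ) + 1 ≤ (m : ℝ) := by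
          exact_mod_cast Int.add_one_le_iff.mpr h'
        have e1 : (1 : ℝ) ≤ u - (k : ℕ) := by push_cast at hk ⊢; linarith
        have e2 : (1 : ℝ) ≤ v - (k : ℕ) := by push_cast at hk ⊢; linarith
        rw [hgz _ (Or.inr e1), hgz _ (Or.inr e2)]; simp
      · have hk : (m : ℝ) + 1 ≤ ((k : ℤ) : ℝ) := by
          exact_mod_cast Int.add_one_le_iff.mpr h'
        have e1 : u - (k : ℕ) ≤ 0 := by push_cast at hk ⊢; linarith
        have e2 : v - (k : ℕ) ≤ 0 := by push_cast at hk ⊢; linarith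
        rw [hgz _ (Or.inl e1), hgz _ (Or.inl e2)]; simp
  -- T is 1-Lipschitz at scale ≤ 1
  have hTlip : ∀ u v : ℝ, u ≤ v → v - u ≤ 1 → |T u - T v| ≤ v - u := by
    intro u v huv h1
    set m := ⌊u⌋ with hm
    have hm1 : (m : ℝ) ≤ u := Int.floor_le u
    have hm2 : u < (m : ℝ) + 1 := Int.lt_floor_add_one u
    rcases le_or_gt v ((m : ℝ) + 1) with hv | hv
    · have := hTcell m u v hm1 hm2.le (le_trans hm1 huv) hv
      calc |T u - T v| ≤ |u - v| := this
        _ = v - u := by rw [abs_sub_comm, abs_of_nonneg (by linarith)]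
    · have hz1 : |T u - T ((m : ℝ) + 1)| ≤ |u - ((m : ℝ) + 1)| :=
        hTcell m u _ hm1 hm2.le (by linarith) le_rfl
      have hz2 : |T ((m : ℝ) + 1) - T v| ≤ |((m : ℝ) + 1) - v| := by
        have := hTcell (m + 1) ((m : ℝ) + 1) v (by push_cast; linarith)
          (by push_cast; linarith) (by push_cast; linarith) (by push_cast; linarith)
        exact this
      calc |T u - T v| ≤ |T u - T ((m : ℝ) + 1)| + |T ((m : ℝ) + 1) - T v| :=
            abs_sub_le _ _ _
        _ ≤ |u - ((m : ℝ) + 1)| + |((m : ℝ) + 1) - v| := add_le_add hz1 hz2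
        _ = ((m : ℝ) + 1 - u) + (v - ((m : ℝ) + 1)) := by
            rw [abs_sub_comm u, abs_of_nonneg (by linarith), abs_of_nonpos (by linarith)]
            ring
        _ = v - u := by ring
  have hTlip' : ∀ u v : ℝ, |u - v| ≤ 1 → |T u - T v| ≤ |u - v| := by
    intro u v h
    rcases le_total u v with h' | h'
    · have e : |u - v| = v - u := by
        rw [abs_sub_comm]; exact abs_of_nonneg (by linarith)
      rw [e]
      exact hTlip u v h' (by rw [e] at h; exact h)
    · have e : |u - v| = u - v := abs_of_nonneg (by linarith)
      rw [e]
      have := hTlip v u h' (by rw [e] at h; exact h)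
      rw [abs_sub_comm] at this
      exact this
  -- main argument
  intro x hx y hy
  have h2N : (0 : ℝ) < 2 ^ N := by positivity
  have hGdiff : |G x - G y| = L * |T ((2:ℝ) ^ N * x) - T ((2:ℝ) ^ N * y)| := by
    rw [hGT x, hGT y, ← mul_sub, abs_mul, abs_of_pos hL]
  set t := |x - y| with htdef
  have ht0 : 0 ≤ t := abs_nonneg _
  rcases eq_or_lt_of_le ht0 with ht | ht
  · -- x = y
    have hxy : x = y := by
      have := abs_eq_zero.mp ht.symm
      linarith [this]
    rw [hxy]
    simp
    positivity
  -- key rewrites for powers of two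
  have h2pos : (0:ℝ) < 2 := by norm_num
  have hrpowN : ((2:ℝ) ^ N : ℝ) = (2:ℝ) ^ (N : ℝ) := by
    rw [Real.rpow_natCast]
  rcases le_or_gt t ((2:ℝ) ^ N)⁻¹ with hcase | hcase
  · -- Lipschitz case
    have habs : |(2:ℝ) ^ N * x - (2:ℝ) ^ N * y| = (2:ℝ) ^ N * t := by
      rw [← mul_sub, abs_mul, abs_of_pos h2N]
    have hle1 : |(2:ℝ) ^ N * x - (2:ℝ) ^ N * y| ≤ 1 := by
      rw [habs]
      calc (2:ℝ) ^ N * t ≤ (2:ℝ) ^ N * ((2:ℝ) ^ N)⁻¹ := by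
            apply mul_le_mul_of_nonneg_left hcase (le_of_lt h2N)
        _ = 1 := mul_inv_cancel₀ (ne_of_gt h2N)
    have hTT := hTlip' _ _ hle1
    rw [habs] at hTT
    rw [hGdiff]
    calc L * |T ((2:ℝ) ^ N * x) - T ((2:ℝ) ^ N * y)| ≤ L * ((2:ℝ) ^ N * t) := by
          apply mul_le_mul_of_nonneg_left hTT (le_of_lt hL)
      _ ≤ M * t ^ α := by
          -- L * 2^N * t ≤ M * t^α
          have e1 : t = t ^ (1 - α) * t ^ α := by
            rw [← Real.rpow_add ht, sub_add_cancel, Real.rpow_one]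
          have e2 : t ^ (1 - α) ≤ ((2:ℝ) ^ N)⁻¹ ^ (1 - α) :=
            Real.rpow_le_rpow (le_of_lt ht) hcase (by linarith)
          have e3 : ((2:ℝ) ^ N)⁻¹ ^ (1 - α) = (2:ℝ) ^ (-(N : ℝ) * (1 - α)) := by
            rw [hrpowN, ← Real.rpow_neg (by norm_num : (0:ℝ) ≤ 2),
              ← Real.rpow_mul (by norm_num : (0:ℝ) ≤ 2)]
          have htα : (0:ℝ) ≤ t ^ α := Real.rpow_nonneg ht.le α
          have key : L * ((2:ℝ) ^ N * t ^ (1 - α)) ≤ M := by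
            have c1 : L * ((2:ℝ) ^ N * t ^ (1 - α)) ≤
                ((2:ℝ) ^ (-(((N:ℝ) - 1) * α + 1)) * M) * ((2:ℝ) ^ N * (2:ℝ) ^ (-(N:ℝ) * (1 - α))) := by
              apply mul_le_mul hLM _ (by positivity) (by positivity)
              apply mul_le_mul_of_nonneg_left _ (le_of_lt h2N)
              rw [← e3]; exact e2
            have c2' : (2:ℝ) ^ (-(((N:ℝ) - 1) * α + 1)) * ((2:ℝ) ^ ((N:ℝ)) * (2:ℝ) ^ (-(N:ℝ) * (1 - α)))
                = (2:ℝ) ^ (α - 1) := by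
              rw [← Real.rpow_add h2pos, ← Real.rpow_add h2pos]
              congr 1
              ring
            have c2 : ((2:ℝ) ^ (-(((N:ℝ) - 1) * α + 1)) * M) * ((2:ℝ) ^ N * (2:ℝ) ^ (-(N:ℝ) * (1 - α)))
                = M * (2:ℝ) ^ (α - 1) := by
              rw [hrpowN, ← c2']
              ring
            have c3 : (2:ℝ) ^ (α - 1) ≤ 1 :=
              Real.rpow_le_one_of_one_le_of_nonpos (by norm_num) (by linarith)
            calc L * ((2:ℝ) ^ N * t ^ (1 - α)) ≤ M * (2:ℝ) ^ (α - 1) := by rw [← c2]; exact c1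
              _ ≤ M * 1 := mul_le_mul_of_nonneg_left c3 (le_of_lt hM)
              _ = M := mul_one M
          calc L * ((2:ℝ) ^ N * t) = (L * ((2:ℝ) ^ N * t ^ (1 - α))) * t ^ α := by
                conv_lhs => rw [e1]
                ring
            _ ≤ M * t ^ α := mul_le_mul_of_nonneg_right key htα
  · -- sup-norm case
    rw [hGdiff]
    have hb : |T ((2:ℝ) ^ N * x) - T ((2:ℝ) ^ N * y)| ≤ 1 := by
      calc |T ((2:ℝ) ^ N * x) - T ((2:ℝ) ^ N * y)| ≤
          |T ((2:ℝ) ^ N * x)| + |T ((2:ℝ) ^ N * y)| := abs_sub _ _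
        _ ≤ 1 / 2 + 1 / 2 := add_le_add (hTbd _) (hTbd _)
        _ = 1 := by norm_num
    calc L * |T ((2:ℝ) ^ N * x) - T ((2:ℝ) ^ N * y)| ≤ L * 1 :=
          mul_le_mul_of_nonneg_left hb (le_of_lt hL)
      _ = L := mul_one L
      _ ≤ (2:ℝ) ^ (-(((N:ℝ) - 1) * α + 1)) * M := hLM
      _ ≤ M * t ^ α := by
          have e1 : ((2:ℝ) ^ N)⁻¹ = (2:ℝ) ^ (-(N:ℝ)) := by
            rw [hrpowN, ← Real.rpow_neg (by norm_num : (0:ℝ) ≤ 2)]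
          have e2 : ((2:ℝ) ^ (-(N:ℝ))) ^ α ≤ t ^ α := by
            apply Real.rpow_le_rpow (by positivity) _ (le_of_lt hα0)
            rw [← e1]; exact le_of_lt hcase
          have e3 : ((2:ℝ) ^ (-(N:ℝ))) ^ α = (2:ℝ) ^ (-(N:ℝ) * α) := by
            rw [← Real.rpow_mul (by norm_num : (0:ℝ) ≤ 2)]
          have e4 : (2:ℝ) ^ (-(((N:ℝ) - 1) * α + 1)) ≤ (2:ℝ) ^ (-(N:ℝ) * α) := by
            apply Real.rpow_le_rpow_of_exponent_le (by norm_num)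
            nlinarith
          calc (2:ℝ) ^ (-(((N:ℝ) - 1) * α + 1)) * M ≤ (2:ℝ) ^ (-(N:ℝ) * α) * M :=
                mul_le_mul_of_nonneg_right e4 (le_of_lt hM)
            _ ≤ t ^ α * M := by
                apply mul_le_mul_of_nonneg_right _ (le_of_lt hM)
                rw [← e3]; exact e2
            _ = M * t ^ α := mul_comm _ _
end

section
/- Let X₁, ..., Xₙ be independent random variables, F a countable class of measurable functions with values in [-1,1], and suppose sup_{f∈F} (1/n)∑ᵢ E[f²(Xᵢ)] ≤ σ². Let ε₁,...,εₙ be i.i.d. Rademacher variables independent of the Xᵢ and set Z̄(F) = sup_{f∈F} |∑ᵢ ε_i f(X_i)|. Then E[ sup_{f∈F} (1/n)∑ᵢ f²(X_i) ] ≤ σ² + 8·E[Z̄(F)]/n. -/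
/-!
Centering each `f²` at its mean costs at most `σ²`. Symmetrization: by Jensen, the centered
supremum is dominated by the supremum of `∑ₖ (f²(Xₖ) - f²(X'ₖ))` for an independent copy `X'`;
exchanging `Xₖ` and `X'ₖ` on any set of coordinates preserves the law of `(X, X')`, so this
equals its version with random signs, which is at most `2 E sup |∑ₖ εₖ f²(Xₖ)|`. Contraction:
`t ↦ t²` is `2`-Lipschitz on `[-1, 1]` and vanishes at `0`, so by the Ledoux–Talagrand
comparison `E_ε sup |∑ₖ εₖ f²(xₖ)| ≤ 4 E_ε sup |∑ₖ εₖ f(xₖ)|`, proved by replacing one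
coordinate at a time and pairing each sign pattern with its flip at that coordinate.

Expectations over Rademacher signs are written as averages `𝔼 s` over sign patterns
`s : κ → Bool`; `integral_comp_rademacher` identifies them with integrals against `ε`.
-/

open MeasureTheory ProbabilityTheory Finset
open scoped BigOperators

namespace EmpiricalProcess

variable {ι κ : Type*}

def boolSign (b : Bool) : ℝ := if b then 1 else -1

@[simp] lemma abs_boolSign (b : Bool) : |boolSign b| = 1 := by cases b <;> simp [boolSign]

@[simp] lemma boolSign_not (b : Bool) : boolSign (!b) = -boolSign b := by
  cases b <;> simp [boolSign]

lemma abs_sum_le_card_mul [Fintype κ] {w : κ → ℝ} {C : ℝ} (h : ∀ k, |w k| ≤ C) :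
    |∑ k, w k| ≤ Fintype.card κ * C :=
  (abs_sum_le_sum_abs _ _).trans <| by simpa using sum_le_sum fun k (_ : k ∈ univ) => h k

section SignSum

variable [Fintype κ]

def signSum (s : κ → Bool) (v : κ → ℝ) : ℝ := ∑ k, boolSign (s k) * v k

lemma abs_signSum_le {s : κ → Bool} {v : κ → ℝ} {C : ℝ} (hv : ∀ k, |v k| ≤ C) :
    |signSum s v| ≤ Fintype.card κ * C :=
  abs_sum_le_card_mul fun k => by rw [abs_mul, abs_boolSign, one_mul]; exact hv k

lemma signSum_not (s : κ → Bool) (v : κ → ℝ) : signSum (fun k => !s k) v = -signSum s v := by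
  simp [signSum, sum_neg_distrib]

@[simp] lemma signSum_zero (s : κ → Bool) : signSum s 0 = 0 := by simp [signSum]

lemma signSum_smul (s : κ → Bool) (c : ℝ) (v : κ → ℝ) : signSum s (c • v) = c * signSum s v := by
  simp only [signSum, mul_sum, Pi.smul_apply, smul_eq_mul]
  exact sum_congr rfl fun _ _ => by ring

lemma signSum_sub (s : κ → Bool) (v w : κ → ℝ) :
    signSum s (v - w) = signSum s v - signSum s w := by
  simp only [signSum, ← sum_sub_distrib, Pi.sub_apply, mul_sub]

lemma signSum_eq_add_sum_erase [DecidableEq κ] (s : κ → Bool) (v : κ → ℝ) (j : κ) :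
    signSum s v = boolSign (s j) * v j + ∑ k ∈ univ.erase j, boolSign (s k) * v k :=
  (add_sum_erase _ _ (mem_univ j)).symm

@[fun_prop] lemma Measurable.signSum {α : Type*} [MeasurableSpace α] {s : κ → Bool}
    {f : α → κ → ℝ} (hf : Measurable f) : Measurable fun x => signSum s (f x) := by
  unfold EmpiricalProcess.signSum; fun_prop

end SignSum

lemma bddAbove_range_of_abs_le {v : ι → ℝ} {C : ℝ} (h : ∀ i, |v i| ≤ C) :
    BddAbove (Set.range v) :=
  ⟨C, Set.forall_mem_range.2 fun i => (abs_le.1 (h i)).2⟩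

lemma abs_ciSup_le [Nonempty ι] {v : ι → ℝ} {C : ℝ} (h : ∀ i, |v i| ≤ C) : |⨆ i, v i| ≤ C := by
  obtain ⟨i₀⟩ := ‹Nonempty ι›
  refine abs_le.2 ⟨(abs_le.1 (h i₀)).1.trans (le_ciSup (bddAbove_range_of_abs_le h) i₀), ?_⟩
  exact ciSup_le fun i => (abs_le.1 (h i)).2

lemma ciSup_add_ciSup_sub_le [Nonempty ι] {S t u : ι → ℝ}
    (hplus : BddAbove (Set.range fun i => S i + t i))
    (hminus : BddAbove (Set.range fun i => S i - t i))
    (hu : ∀ i j, |u i - u j| ≤ |t i - t j|) :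
    (⨆ i, S i + u i) + (⨆ i, S i - u i) ≤ (⨆ i, S i + t i) + (⨆ i, S i - t i) := by
  have key : ∀ i j, (S i + u i) + (S j - u j) ≤ (⨆ i, S i + t i) + (⨆ i, S i - t i) := by
    intro i j
    have hij := (le_abs_self _).trans (hu i j)
    rcases le_total (t j) (t i) with h | h
    · rw [abs_of_nonneg (sub_nonneg.2 h)] at hij
      linarith [le_ciSup hplus i, le_ciSup hminus j]
    · rw [abs_of_nonpos (sub_nonpos.2 h)] at hij
      linarith [le_ciSup hplus j, le_ciSup hminus i]
  rw [← le_sub_iff_add_le]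
  refine ciSup_le fun i => ?_
  rw [le_sub_iff_add_le', ← le_sub_iff_add_le]
  exact ciSup_le fun j => by linarith [key i j]

lemma expect_le_expect_of_involutive [Fintype κ] [Nonempty κ] {σ : κ → κ}
    (hσ : Function.Involutive σ) {G H : κ → ℝ} (h : ∀ s, G s + G (σ s) ≤ H s + H (σ s)) :
    𝔼 s, G s ≤ 𝔼 s, H s := by
  have hG : 𝔼 s, G (σ s) = 𝔼 s, G s := Fintype.expect_equiv (hσ.toPerm σ) _ _ fun _ => rfl
  have hH : 𝔼 s, H (σ s) = 𝔼 s, H s := Fintype.expect_equiv (hσ.toPerm σ) _ _ fun _ => rfl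
  have := expect_le_expect (s := univ) fun s _ => h s
  rw [expect_add_distrib, expect_add_distrib, hG, hH] at this
  linarith

section Contraction

variable [Fintype κ] [DecidableEq κ] [Nonempty ι]

lemma expect_ciSup_signSum_le_of_eq_off {a b : ι → κ → ℝ} {C : ℝ}
    (ha : ∀ i k, |a i k| ≤ C) (j : κ)
    (hoff : ∀ i k, k ≠ j → b i k = a i k) (hj : ∀ i i', |b i j - b i' j| ≤ |a i j - a i' j|) :
    𝔼 s, ⨆ i, signSum s (b i) ≤ 𝔼 s, ⨆ i, signSum s (a i) := by
  refine expect_le_expect_of_involutive (σ := fun s => Function.update s j (!s j))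
    (fun s => by simp) fun s => ?_
  set T : ι → ℝ := fun i => ∑ k ∈ univ.erase j, boolSign (s k) * a i k
  have split : ∀ (s' : κ → Bool) (w : ι → κ → ℝ), (∀ k, k ≠ j → s' k = s k) →
      (∀ i k, k ≠ j → w i k = a i k) →
        ∀ i, signSum s' (w i) = T i + boolSign (s' j) * w i j := by
    intro s' w hs' hw i
    rw [signSum_eq_add_sum_erase _ _ j, add_comm]
    congr 1
    refine sum_congr rfl fun k hk => ?_
    rw [hs' k (ne_of_mem_erase hk), hw i k (ne_of_mem_erase hk)]
  have hflip : ∀ k, k ≠ j → Function.update s j (!s j) k = s k :=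
    fun k hk => Function.update_of_ne hk _ _
  -- Pairing `s` with its flip at `j` reduces the claim to `ciSup_add_ciSup_sub_le`.
  simp only [split s b (fun _ _ => rfl) hoff, split s a (fun _ _ => rfl) (fun _ _ _ => rfl),
    split _ b hflip hoff, split _ a hflip (fun _ _ _ => rfl), Function.update_self, boolSign_not,
    neg_mul, ← sub_eq_add_neg]
  have hbdd : ∀ s' : κ → Bool, BddAbove (Set.range fun i => signSum s' (a i)) := fun s' =>
    bddAbove_range_of_abs_le fun i => abs_signSum_le (ha i)
  refine ciSup_add_ciSup_sub_le ?_ ?_ fun i i' => ?_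
  · simpa only [split s a (fun _ _ => rfl) (fun _ _ _ => rfl)] using hbdd s
  · simpa only [split _ a hflip (fun _ _ _ => rfl), Function.update_self, boolSign_not, neg_mul,
      ← sub_eq_add_neg] using hbdd (Function.update s j (!s j))
  · simpa only [← mul_sub, abs_mul, abs_boolSign, one_mul] using hj i i'

theorem expect_ciSup_signSum_le {a b : ι → κ → ℝ} {C : ℝ}
    (ha : ∀ i k, |a i k| ≤ C) (hb : ∀ i k, |b i k| ≤ C)
    (hab : ∀ i i' k, |b i k - b i' k| ≤ |a i k - a i' k|) :
    𝔼 s, ⨆ i, signSum s (b i) ≤ 𝔼 s, ⨆ i, signSum s (a i) := by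
  let c : Finset κ → ι → κ → ℝ := fun J i k => if k ∈ J then b i k else a i k
  have hc : ∀ J i k, |c J i k| ≤ C := fun J i k => by
    by_cases hk : k ∈ J <;> simp [c, hk, ha, hb]
  suffices ∀ J, 𝔼 s, ⨆ i, signSum s (c J i) ≤ 𝔼 s, ⨆ i, signSum s (a i) by
    simpa [c] using this univ
  intro J
  induction J using Finset.induction_on with
  | empty => simp [c]
  | insert j J hj ih =>
    refine le_trans (expect_ciSup_signSum_le_of_eq_off (hc J) j
      (fun i k hk => by simp [c, hk]) fun i i' => ?_) ih
    simpa [c, hj] using hab i i' j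

lemma expect_ciSup_abs_signSum_le_two_mul {b : ι → κ → ℝ} {C : ℝ} (hb : ∀ i k, |b i k| ≤ C) :
    𝔼 s, ⨆ i, |signSum s (b i)| ≤ 2 * 𝔼 s, ⨆ o : Option ι, signSum s (o.elim 0 b) := by
  -- `|x| ≤ max x 0 + max (-x) 0`, the index `none` supplying the `0`; flipping every sign
  -- exchanges the two terms.
  obtain ⟨i₀⟩ := ‹Nonempty ι›
  have hb' : ∀ (o : Option ι) k, |o.elim 0 b k| ≤ C := by
    rintro (_ | i) k
    · simpa using (abs_nonneg _).trans (hb i₀ k)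
    · exact hb i k
  have hbdd : ∀ s, BddAbove (Set.range fun o : Option ι => signSum s (o.elim 0 b)) := fun s =>
    bddAbove_range_of_abs_le fun o => abs_signSum_le (hb' o)
  have hsplit : ∀ s, ⨆ i, |signSum s (b i)| ≤ (⨆ o : Option ι, signSum s (o.elim 0 b))
      + ⨆ o : Option ι, signSum (fun k => !s k) (o.elim 0 b) := by
    intro s
    refine ciSup_le fun i => abs_le'.2 ⟨?_, ?_⟩
    · have h₁ : signSum s (b i) ≤ _ := le_ciSup (hbdd s) (some i)
      have h₀ : signSum (fun k => !s k) 0 ≤ _ := le_ciSup (hbdd fun k => !s k) none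
      rw [signSum_zero] at h₀
      linarith
    · have h₁ : signSum (fun k => !s k) (b i) ≤ _ := le_ciSup (hbdd fun k => !s k) (some i)
      have h₀ : signSum s 0 ≤ _ := le_ciSup (hbdd s) none
      rw [signSum_zero] at h₀
      rw [signSum_not] at h₁
      linarith
  have hflip : 𝔼 s : κ → Bool, ⨆ o : Option ι, signSum (fun k => !s k) (o.elim 0 b)
      = 𝔼 s, ⨆ o : Option ι, signSum s (o.elim 0 b) :=
    Fintype.expect_equiv (Function.Involutive.toPerm (fun (s : κ → Bool) k => !s k)
      fun s => by simp) _ _ fun _ => rfl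
  calc _ ≤ 𝔼 s, ((⨆ o : Option ι, signSum s (o.elim 0 b))
          + ⨆ o : Option ι, signSum (fun k => !s k) (o.elim 0 b)) :=
        expect_le_expect fun s _ => hsplit s
    _ = _ := by rw [expect_add_distrib, hflip]; ring

theorem expect_ciSup_abs_signSum_le {a b : ι → κ → ℝ} {C L : ℝ} (hL : 0 ≤ L)
    (ha : ∀ i k, |a i k| ≤ C) (hlip : ∀ i i' k, |b i k - b i' k| ≤ L * |a i k - a i' k|)
    (hzero : ∀ i k, |b i k| ≤ L * |a i k|) :
    𝔼 s, ⨆ i, |signSum s (b i)| ≤ 2 * L * 𝔼 s, ⨆ i, |signSum s (a i)| := by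
  let a' : Option ι → κ → ℝ := fun o => o.elim 0 fun i => L • a i
  let b' : Option ι → κ → ℝ := fun o => o.elim 0 b
  obtain ⟨i₀⟩ := ‹Nonempty ι›
  have hLC : ∀ k, 0 ≤ L * C := fun k => mul_nonneg hL ((abs_nonneg _).trans (ha i₀ k))
  have ha' : ∀ o k, |a' o k| ≤ L * C := by
    rintro (_ | i) k
    · simpa [a'] using hLC k
    · simpa [a', abs_mul, abs_of_nonneg hL] using mul_le_mul_of_nonneg_left (ha i k) hL
  have hb : ∀ i k, |b i k| ≤ L * C := fun i k =>
    (hzero i k).trans (mul_le_mul_of_nonneg_left (ha i k) hL)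
  have hb' : ∀ o k, |b' o k| ≤ L * C := by
    rintro (_ | i) k
    · simpa [b'] using hLC k
    · exact hb i k
  have hlip' : ∀ o o' k, |b' o k - b' o' k| ≤ |a' o k - a' o' k| := by
    rintro (_ | i) (_ | i') k <;>
      simp [a', b', abs_mul, abs_of_nonneg hL, ← mul_sub, hlip, hzero]
  have hback : ∀ s, ⨆ o, signSum s (a' o) ≤ L * ⨆ i, |signSum s (a i)| := by
    intro s
    have hbdd : BddAbove (Set.range fun i => |signSum s (a i)|) :=
      bddAbove_range_of_abs_le fun i => by rw [abs_abs]; exact abs_signSum_le (ha i)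
    refine ciSup_le ?_
    rintro (_ | i)
    · simpa [a'] using mul_nonneg hL ((abs_nonneg _).trans (le_ciSup hbdd i₀))
    · simp only [a', Option.elim_some, signSum_smul]
      exact mul_le_mul_of_nonneg_left ((le_abs_self _).trans (le_ciSup hbdd i)) hL
  calc 𝔼 s, ⨆ i, |signSum s (b i)| ≤ 2 * 𝔼 s, ⨆ o, signSum s (b' o) :=
        expect_ciSup_abs_signSum_le_two_mul hb
    _ ≤ 2 * 𝔼 s, ⨆ o, signSum s (a' o) :=
        mul_le_mul_of_nonneg_left (expect_ciSup_signSum_le ha' hb' hlip') zero_le_two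
    _ ≤ 2 * L * 𝔼 s, ⨆ i, |signSum s (a i)| := by
        rw [mul_assoc, mul_expect _ _ L]
        exact mul_le_mul_of_nonneg_left (expect_le_expect fun s _ => hback s) zero_le_two

theorem expect_ciSup_abs_signSum_sq_le {a : ι → κ → ℝ} (ha : ∀ i k, |a i k| ≤ 1) :
    𝔼 s, ⨆ i, |signSum s (fun k => a i k ^ 2)| ≤ 4 * 𝔼 s, ⨆ i, |signSum s (a i)| := by
  have h := expect_ciSup_abs_signSum_le (b := fun i k => a i k ^ 2) zero_le_two ha
    (fun i i' k => ?_) (fun i k => ?_)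
  · linarith
  · rw [sq_sub_sq, abs_mul]
    exact mul_le_mul_of_nonneg_right
      (by linarith [abs_add_le (a i k) (a i' k), ha i k, ha i' k]) (abs_nonneg _)
  · rw [abs_pow, sq]
    nlinarith [ha i k, abs_nonneg (a i k)]

end Contraction

section Integration

variable {α : Type*} [MeasurableSpace α]

lemma abs_sub_integral_le {μ : Measure α} [IsProbabilityMeasure μ] {f : α → ℝ} {C : ℝ}
    (hf : ∀ x, |f x| ≤ C) (x : α) : |f x - ∫ y, f y ∂μ| ≤ C + C := by
  have := norm_integral_le_of_norm_le_const (μ := μ) (f := f) (.of_forall hf)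
  exact (abs_sub _ _).trans (add_le_add (hf x) (by simpa using this))

lemma integrable_ciSup_of_abs_le [Countable ι] [Nonempty ι] {μ : Measure α} [IsFiniteMeasure μ]
    {F : ι → α → ℝ} (hF : ∀ i, Measurable (F i)) {C : ℝ} (hC : ∀ i x, |F i x| ≤ C) :
    Integrable (fun x => ⨆ i, F i x) μ :=
  .of_bound (Measurable.iSup hF).aestronglyMeasurable C
    (.of_forall fun x => abs_ciSup_le fun i => hC i x)

lemma integrable_expect [Fintype κ] {μ : Measure α} {F : κ → α → ℝ}
    (hF : ∀ s, Integrable (F s) μ) : Integrable (fun x => 𝔼 s, F s x) μ := by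
  simp only [Fintype.expect_eq_sum_div_card]
  exact (integrable_finsetSum _ fun s _ => hF s).div_const _

lemma integral_expect [Fintype κ] {μ : Measure α} {F : κ → α → ℝ}
    (hF : ∀ s, Integrable (F s) μ) :
    ∫ x, 𝔼 s, F s x ∂μ = 𝔼 s, ∫ x, F s x ∂μ := by
  simp only [Fintype.expect_eq_sum_div_card]
  rw [integral_div, integral_finsetSum _ fun s _ => hF s]

lemma measurePreserving_swapCoords [Fintype κ] (ν : κ → Measure α) [∀ k, SigmaFinite (ν k)]
    (s : κ → Bool) :
    MeasurePreserving (fun p : (κ → α) × (κ → α) =>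
        ((fun k => if s k then p.1 k else p.2 k), fun k => if s k then p.2 k else p.1 k))
      ((Measure.pi ν).prod (Measure.pi ν)) ((Measure.pi ν).prod (Measure.pi ν)) := by
  have hE := measurePreserving_arrowProdEquivProdArrow α α κ ν ν
  have hswap : MeasurePreserving
      (fun (z : κ → α × α) k => (if s k then id else Prod.swap) (z k))
      (Measure.pi fun k => (ν k).prod (ν k)) (Measure.pi fun k => (ν k).prod (ν k)) :=
    measurePreserving_pi _ _ fun k => by
      cases s k
      · exact Measure.measurePreserving_swap
      · exact MeasurePreserving.id _
  convert hE.comp (hswap.comp hE.symm) using 1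
  funext p
  ext k <;> cases h : s k <;>
    simp [h, MeasurableEquiv.arrowProdEquivProdArrow, Equiv.arrowProdEquivProdArrow]

theorem expect_integral_ciSup_abs_signSum_sq_le {μ : Measure α} [IsFiniteMeasure μ] [Fintype κ]
    [DecidableEq κ] [Countable ι] [Nonempty ι]
    {a : ι → κ → α → ℝ} (ha : ∀ i k, Measurable (a i k)) (hab : ∀ i k ω, |a i k ω| ≤ 1) :
    𝔼 s, ∫ ω, ⨆ i, |signSum s fun k => a i k ω ^ 2| ∂μ
      ≤ 4 * 𝔼 s, ∫ ω, ⨆ i, |signSum s fun k => a i k ω| ∂μ := by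
  have hint : ∀ (b : ι → κ → α → ℝ), (∀ i k, Measurable (b i k)) → (∀ i k ω, |b i k ω| ≤ 1) →
      ∀ s : κ → Bool, Integrable (fun ω => ⨆ i, |signSum s fun k => b i k ω|) μ :=
    fun b hbm hb s => integrable_ciSup_of_abs_le (fun i => by fun_prop) fun i ω => by
      rw [abs_abs]; exact abs_signSum_le fun k => hb i k ω
  have hsq : ∀ i k ω, |a i k ω ^ 2| ≤ 1 := fun i k ω => by
    rw [abs_pow]; exact pow_le_one₀ (abs_nonneg _) (hab i k ω)
  have hint₂ := hint (fun i k ω => a i k ω ^ 2) (fun i k => (ha i k).pow_const 2) hsq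
  have hint₁ := hint a ha hab
  rw [← integral_expect hint₂, ← integral_expect hint₁, ← integral_const_mul]
  exact integral_mono (integrable_expect hint₂) ((integrable_expect hint₁).const_mul 4)
    fun ω => expect_ciSup_abs_signSum_sq_le fun i k => hab i k ω

end Integration

section Symmetrization

variable {α : Type*} [MeasurableSpace α] [Fintype κ] [Countable ι]
  {ν : κ → Measure α} [∀ k, IsProbabilityMeasure (ν k)] {g : ι → α → ℝ} {C : ℝ}

lemma ciSup_sum_sub_integral_le [Nonempty ι] (hg : ∀ i, Measurable (g i))
    (hgb : ∀ i y, |g i y| ≤ C) (x : κ → α) :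
    ⨆ i, ∑ k, (g i (x k) - ∫ y, g i y ∂ν k)
      ≤ ∫ y, ⨆ i, ∑ k, (g i (x k) - g i (y k)) ∂Measure.pi ν := by
  have hdiff : ∀ i (y : κ → α), |∑ k, (g i (x k) - g i (y k))| ≤ Fintype.card κ * (C + C) :=
    fun i y => abs_sum_le_card_mul fun k =>
      (abs_sub _ _).trans (add_le_add (hgb i (x k)) (hgb i (y k)))
  refine ciSup_le fun i => ?_
  have hint : ∀ k, Integrable (fun y : κ → α => g i (y k)) (Measure.pi ν) := fun k =>
    .of_bound (by fun_prop : Measurable _).aestronglyMeasurable C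
      (.of_forall fun y => hgb i (y k))
  have hint' : ∀ k, Integrable (fun y : κ → α => g i (x k) - g i (y k)) (Measure.pi ν) :=
    fun k => (integrable_const _).sub (hint k)
  calc ∑ k, (g i (x k) - ∫ y, g i y ∂ν k)
      = ∫ y, ∑ k, (g i (x k) - g i (y k)) ∂Measure.pi ν := by
        rw [integral_finsetSum _ fun k _ => hint' k]
        refine sum_congr rfl fun k _ => ?_
        rw [integral_sub (integrable_const _) (hint k), integral_const,
          integral_comp_eval (hg i).aestronglyMeasurable]
        simp
    _ ≤ _ := integral_mono
        (.of_bound (by fun_prop : Measurable _).aestronglyMeasurable _ (.of_forall (hdiff i)))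
        (integrable_ciSup_of_abs_le (fun i => by fun_prop) hdiff)
        fun y => le_ciSup (bddAbove_range_of_abs_le fun i => hdiff i y) i

lemma integral_ciSup_sum_sub_eq_signSum (hg : ∀ i, Measurable (g i)) (s : κ → Bool) :
    ∫ p, ⨆ i, ∑ k, (g i (p.1 k) - g i (p.2 k)) ∂(Measure.pi ν).prod (Measure.pi ν)
      = ∫ p, ⨆ i, signSum s (fun k => g i (p.1 k) - g i (p.2 k))
          ∂(Measure.pi ν).prod (Measure.pi ν) := by
  have hτ := measurePreserving_swapCoords ν s
  conv_lhs => rw [← hτ.map_eq]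
  rw [integral_map hτ.measurable.aemeasurable
    (Measurable.iSup fun i => by fun_prop).aestronglyMeasurable]
  refine integral_congr_ae (.of_forall fun p => iSup_congr fun i => sum_congr rfl fun k _ => ?_)
  cases h : s k <;> simp [h, boolSign]

lemma integral_ciSup_signSum_sub_le [Nonempty ι] (hg : ∀ i, Measurable (g i))
    (hgb : ∀ i y, |g i y| ≤ C) (s : κ → Bool) :
    ∫ p, ⨆ i, signSum s (fun k => g i (p.1 k) - g i (p.2 k))
        ∂(Measure.pi ν).prod (Measure.pi ν)
      ≤ 2 * ∫ x, ⨆ i, |signSum s fun k => g i (x k)| ∂Measure.pi ν := by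
  set R : (κ → α) → ℝ := fun x => ⨆ i, |signSum s fun k => g i (x k)|
  have hbound : ∀ i (x : κ → α), |(|signSum s fun k => g i (x k)|)| ≤ Fintype.card κ * C :=
    fun i x => by rw [abs_abs]; exact abs_signSum_le fun k => hgb i (x k)
  have hR : Integrable R (Measure.pi ν) :=
    integrable_ciSup_of_abs_le (fun i => by fun_prop) hbound
  have hpoint : ∀ p : (κ → α) × (κ → α),
      ⨆ i, signSum s (fun k => g i (p.1 k) - g i (p.2 k)) ≤ R p.1 + R p.2 := fun p =>
    ciSup_le fun i => by
      rw [show (fun k => g i (p.1 k) - g i (p.2 k))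
          = (fun k => g i (p.1 k)) - fun k => g i (p.2 k) from rfl, signSum_sub]
      have h₁ := le_ciSup (bddAbove_range_of_abs_le fun i => hbound i p.1) i
      have h₂ := le_ciSup (bddAbove_range_of_abs_le fun i => hbound i p.2) i
      linarith [le_abs_self (signSum s fun k => g i (p.1 k)),
        neg_abs_le (signSum s fun k => g i (p.2 k))]
  calc _ ≤ ∫ p, R p.1 + R p.2 ∂(Measure.pi ν).prod (Measure.pi ν) :=
        integral_mono (integrable_ciSup_of_abs_le (fun i => by fun_prop) fun i p =>
          abs_signSum_le fun k => (abs_sub _ _).trans (add_le_add (hgb i (p.1 k)) (hgb i (p.2 k))))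
          ((hR.comp_fst _).add (hR.comp_snd _)) hpoint
    _ = 2 * ∫ x, R x ∂Measure.pi ν := by
        rw [integral_add (hR.comp_fst _) (hR.comp_snd _), integral_fun_fst, integral_fun_snd]
        simp; ring

theorem integral_ciSup_sum_sub_integral_le_pi [DecidableEq κ] [Nonempty ι]
    (hg : ∀ i, Measurable (g i)) (hgb : ∀ i y, |g i y| ≤ C) :
    ∫ x, ⨆ i, ∑ k, (g i (x k) - ∫ y, g i y ∂ν k) ∂Measure.pi ν
      ≤ 2 * 𝔼 s, ∫ x, ⨆ i, |signSum s fun k => g i (x k)| ∂Measure.pi ν := by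
  set P := Measure.pi ν
  have hD : Integrable (fun p : (κ → α) × (κ → α) => ⨆ i, ∑ k, (g i (p.1 k) - g i (p.2 k)))
      (P.prod P) :=
    integrable_ciSup_of_abs_le (fun i => by fun_prop) fun i p => abs_sum_le_card_mul fun k =>
      (abs_sub _ _).trans (add_le_add (hgb i (p.1 k)) (hgb i (p.2 k)))
  have hW : ∫ x, ⨆ i, ∑ k, (g i (x k) - ∫ y, g i y ∂ν k) ∂P
      ≤ ∫ p, ⨆ i, ∑ k, (g i (p.1 k) - g i (p.2 k)) ∂P.prod P := by
    rw [integral_prod _ hD]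
    exact integral_mono (integrable_ciSup_of_abs_le (fun i => by fun_prop) fun i x =>
      abs_sum_le_card_mul fun k => abs_sub_integral_le (hgb i) (x k)) hD.integral_prod_left
      (ciSup_sum_sub_integral_le hg hgb)
  rw [mul_expect]
  refine le_expect univ_nonempty fun s _ => hW.trans ?_
  rw [integral_ciSup_sum_sub_eq_signSum hg s]
  exact integral_ciSup_signSum_sub_le hg hgb s

end Symmetrization

section RandomVariables

variable {Ω α β : Type*} [MeasurableSpace Ω] [MeasurableSpace α] [MeasurableSpace β]
  {μ : Measure Ω}

lemma integral_comp_eq_integral_pi [Fintype κ] {X : κ → Ω → α} (hX : ∀ k, Measurable (X k))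
    (hindep : iIndepFun X μ) {F : (κ → α) → ℝ} (hF : Measurable F) :
    ∫ ω, F (fun k => X k ω) ∂μ = ∫ x, F x ∂Measure.pi fun k => μ.map (X k) := by
  rw [← hindep.map_fun_eq_pi_map fun k => (hX k).aemeasurable,
    integral_map (measurable_pi_lambda _ hX).aemeasurable hF.aestronglyMeasurable]

lemma ae_eq_boolSign_decide [IsProbabilityMeasure μ] {ε : Ω → ℝ} (hε : Measurable ε)
    (h₁ : μ {ω | ε ω = 1} = 1 / 2) (h₂ : μ {ω | ε ω = -1} = 1 / 2) :
    ∀ᵐ ω ∂μ, ε ω = boolSign (decide (ε ω = 1)) := by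
  have hpm : ∀ᵐ ω ∂μ, ε ω = 1 ∨ ε ω = -1 := by
    have hdisj : Disjoint {ω | ε ω = 1} {ω | ε ω = -1} :=
      Set.disjoint_left.2 fun ω (h : ε ω = 1) (h' : ε ω = -1) => by linarith
    have hS : MeasurableSet {ω | ε ω = 1 ∨ ε ω = -1} :=
      (hε (measurableSet_singleton 1)).union (hε (measurableSet_singleton (-1)))
    rw [ae_iff_measure_eq hS.nullMeasurableSet, Set.ofPred_or,
      measure_union hdisj (hε (measurableSet_singleton (-1))), h₁, h₂, ENNReal.add_halves,
      measure_univ]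
  filter_upwards [hpm] with ω h
  rcases h with h | h <;> simp [h, boolSign]

lemma measurable_decide_eq_one : Measurable fun x : ℝ => decide (x = 1) :=
  measurable_to_bool <| by convert measurableSet_singleton (1 : ℝ); ext; simp

lemma measure_forall_decide_eq [IsProbabilityMeasure μ] [Fintype κ] {ε : κ → Ω → ℝ}
    (hεm : ∀ k, Measurable (ε k)) (hε : ∀ k, μ {ω | ε k ω = 1} = 1 / 2) (hindep : iIndepFun ε μ)
    (s : κ → Bool) :
    μ {ω | ∀ k, decide (ε k ω = 1) = s k} = (2 ^ Fintype.card κ)⁻¹ := by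
  have hb := hindep.comp (fun _ x => decide (x = 1)) fun _ => measurable_decide_eq_one
  have hhalf : ∀ k, μ ((fun x : ℝ => decide (x = 1)) ∘ ε k ⁻¹' {s k}) = 2⁻¹ := by
    intro k
    cases s k
    · rw [show (fun x : ℝ => decide (x = 1)) ∘ ε k ⁻¹' {false} = {ω | ε k ω = 1}ᶜ by ext; simp,
        prob_compl_eq_one_sub (s := {ω | ε k ω = 1}) (hεm k (measurableSet_singleton 1)), hε k,
        one_div, ENNReal.one_sub_inv_two]
    · rw [← one_div, ← hε k]
      congr 1
      ext; simp
  rw [show {ω | ∀ k, decide (ε k ω = 1) = s k}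
      = ⋂ k, (fun x : ℝ => decide (x = 1)) ∘ ε k ⁻¹' {s k} by ext; simp,
    hb.meas_iInter fun k => ⟨{s k}, measurableSet_singleton _, rfl⟩]
  simp [hhalf, ENNReal.inv_pow]

theorem integral_comp_rademacher [IsProbabilityMeasure μ] [Fintype κ] [DecidableEq κ]
    {ε : κ → Ω → ℝ} (hεm : ∀ k, Measurable (ε k))
    (hεlaw : ∀ k, μ {ω | ε k ω = 1} = 1 / 2 ∧ μ {ω | ε k ω = -1} = 1 / 2)
    (hεindep : iIndepFun ε μ) {Y : Ω → β} (hY : Measurable Y)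
    (hεY : IndepFun (fun ω k => ε k ω) Y μ) {G : (κ → ℝ) → β → ℝ}
    (hG : ∀ s : κ → Bool, Measurable (G fun k => boolSign (s k))) {C : ℝ}
    (hGb : ∀ (s : κ → Bool) y, |G (fun k => boolSign (s k)) y| ≤ C) :
    ∫ ω, G (fun k => ε k ω) (Y ω) ∂μ
      = 𝔼 s : κ → Bool, ∫ ω, G (fun k => boolSign (s k)) (Y ω) ∂μ := by
  -- `ε = boolSign ∘ b` a.s., and `b` is uniform on the finite set of sign patterns.
  set b : Ω → κ → Bool := fun ω k => decide (ε k ω = 1)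
  have hdecide : Measurable fun (e : κ → ℝ) k => decide (e k = 1) :=
    measurable_pi_lambda _ fun k => measurable_decide_eq_one.comp (measurable_pi_apply k)
  have hb : Measurable b := hdecide.comp (measurable_pi_lambda _ hεm)
  let F : (κ → Bool) × β → ℝ := fun p => G (fun k => boolSign (p.1 k)) p.2
  have hF : Measurable F := measurable_from_prod_countable_right fun s => hG s
  have hlaw : μ.map (fun ω => (b ω, Y ω)) = (μ.map b).prod (μ.map Y) :=
    (indepFun_iff_map_prod_eq_prod_map_map hb.aemeasurable hY.aemeasurable).1
      (hεY.comp hdecide measurable_id)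
  have hb_singleton : ∀ s, (μ.map b).real {s} = (Fintype.card (κ → Bool) : ℝ)⁻¹ := fun s => by
    rw [measureReal_def, Measure.map_apply hb (measurableSet_singleton s),
      show b ⁻¹' {s} = {ω | ∀ k, decide (ε k ω = 1) = s k} by ext; simp [b, funext_iff],
      measure_forall_decide_eq hεm (fun k => (hεlaw k).1) hεindep s]
    simp
  calc ∫ ω, G (fun k => ε k ω) (Y ω) ∂μ = ∫ ω, F (b ω, Y ω) ∂μ := by
        refine integral_congr_ae ?_
        filter_upwards [ae_all_iff.2 fun k =>
          ae_eq_boolSign_decide (hεm k) (hεlaw k).1 (hεlaw k).2] with ω hω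
        simp only [F, b, ← hω]
    _ = ∫ p, F p ∂(μ.map b).prod (μ.map Y) := by
        rw [← hlaw, integral_map (hb.prodMk hY).aemeasurable hF.aestronglyMeasurable]
    _ = ∑ s, (μ.map b).real {s} • ∫ y, F (s, y) ∂μ.map Y := by
        rw [integral_prod _ (.of_bound hF.aestronglyMeasurable C (.of_forall fun p => hGb _ _)),
          integral_fintype .of_finite]
    _ = 𝔼 s : κ → Bool, ∫ ω, G (fun k => boolSign (s k)) (Y ω) ∂μ := by
        simp only [hb_singleton, Fintype.expect_eq_sum_div_card, sum_div, smul_eq_mul,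
          inv_mul_eq_div]
        refine sum_congr rfl fun s _ => ?_
        rw [integral_map hY.aemeasurable (hG s).aestronglyMeasurable]

theorem integral_ciSup_sum_sub_integral_le [IsProbabilityMeasure μ] [Fintype κ] [DecidableEq κ]
    [Countable ι] [Nonempty ι] {X : κ → Ω → α} (hX : ∀ k, Measurable (X k))
    (hindep : iIndepFun X μ) {g : ι → α → ℝ} (hg : ∀ i, Measurable (g i)) {C : ℝ}
    (hgb : ∀ i x, |g i x| ≤ C) :
    ∫ ω, ⨆ i, ∑ k, (g i (X k ω) - ∫ ω', g i (X k ω') ∂μ) ∂μ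
      ≤ 2 * 𝔼 s, ∫ ω, ⨆ i, |signSum s fun k => g i (X k ω)| ∂μ := by
  have := fun k => Measure.isProbabilityMeasure_map (μ := μ) (hX k).aemeasurable
  have hmean : ∀ i k, ∫ ω, g i (X k ω) ∂μ = ∫ y, g i y ∂μ.map (X k) := fun i k =>
    (integral_map (hX k).aemeasurable (hg i).aestronglyMeasurable).symm
  simp only [hmean]
  rw [integral_comp_eq_integral_pi hX hindep
    (F := fun x => ⨆ i, ∑ k, (g i (x k) - ∫ y, g i y ∂μ.map (X k)))
    (Measurable.iSup fun i => by fun_prop)]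
  refine (integral_ciSup_sum_sub_integral_le_pi hg hgb).trans_eq ?_
  congr 1
  exact expect_congr rfl fun s _ => (integral_comp_eq_integral_pi hX hindep
    (F := fun x => ⨆ i, |signSum s fun k => g i (x k)|) (Measurable.iSup fun i => by fun_prop)).symm

theorem integral_ciSup_mul_sum_le [IsProbabilityMeasure μ] [Fintype κ] [DecidableEq κ]
    [Countable ι] [Nonempty ι] {X : κ → Ω → α} (hX : ∀ k, Measurable (X k))
    (hindep : iIndepFun X μ) {g : ι → α → ℝ} (hg : ∀ i, Measurable (g i)) {C : ℝ}
    (hgb : ∀ i x, |g i x| ≤ C) {c d : ℝ} (hc : 0 ≤ c)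
    (hd : ∀ i, c * ∑ k, ∫ ω, g i (X k ω) ∂μ ≤ d) :
    ∫ ω, ⨆ i, c * ∑ k, g i (X k ω) ∂μ
      ≤ d + 2 * c * 𝔼 s, ∫ ω, ⨆ i, |signSum s fun k => g i (X k ω)| ∂μ := by
  set W : Ω → ℝ := fun ω => ⨆ i, ∑ k, (g i (X k ω) - ∫ ω', g i (X k ω') ∂μ)
  have hWb : ∀ i ω, |∑ k, (g i (X k ω) - ∫ ω', g i (X k ω') ∂μ)| ≤ Fintype.card κ * (C + C) :=
    fun i ω => abs_sum_le_card_mul fun k => abs_sub_integral_le (fun ω => hgb i (X k ω)) ω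
  have hW : Integrable W μ := integrable_ciSup_of_abs_le (fun i => by fun_prop) hWb
  have hpoint : ∀ ω, ⨆ i, c * ∑ k, g i (X k ω) ≤ d + c * W ω := fun ω => ciSup_le fun i => by
    have h := mul_le_mul_of_nonneg_left (le_ciSup (bddAbove_range_of_abs_le (hWb · ω)) i) hc
    rw [sum_sub_distrib, mul_sub] at h
    linarith [hd i]
  have hbound : ∀ i ω, |c * ∑ k, g i (X k ω)| ≤ |c| * (Fintype.card κ * C) := fun i ω => by
    rw [abs_mul]
    exact mul_le_mul_of_nonneg_left (abs_sum_le_card_mul fun k => hgb i (X k ω)) (abs_nonneg c)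
  have hsymm := mul_le_mul_of_nonneg_left (integral_ciSup_sum_sub_integral_le hX hindep hg hgb) hc
  calc _ ≤ ∫ ω, d + c * W ω ∂μ :=
        integral_mono (integrable_ciSup_of_abs_le (fun i => by fun_prop) hbound)
          ((integrable_const d).add (hW.const_mul c)) hpoint
    _ = d + c * ∫ ω, W ω ∂μ := by
        rw [integral_add (integrable_const d) (hW.const_mul c), integral_const_mul]
        simp
    _ ≤ _ := by linarith

end RandomVariables

end EmpiricalProcess

open EmpiricalProcess

theorem stmt_15_general {Ω 𝒳 : Type*} [MeasurableSpace Ω] [MeasurableSpace 𝒳]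
    (μ : Measure Ω) [IsProbabilityMeasure μ]
    (n : ℕ) (X : Fin n → Ω → 𝒳) (hXm : ∀ i, Measurable (X i))
    (hXindep : iIndepFun X μ)
    {ι : Type*} [Countable ι] [Nonempty ι]
    (f : ι → 𝒳 → ℝ) (hfm : ∀ i, Measurable (f i))
    (hfb : ∀ i x, f i x ∈ Set.Icc (-1:ℝ) 1)
    (σ : ℝ) (hσ : ∀ i, (1 / (n:ℝ)) * ∑ k, ∫ ω, (f i (X k ω)) ^ 2 ∂μ ≤ σ ^ 2)
    (ε : Fin n → Ω → ℝ) (hεm : ∀ k, Measurable (ε k))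
    (hεlaw : ∀ k, μ {ω | ε k ω = 1} = 1/2 ∧ μ {ω | ε k ω = -1} = 1/2)
    (hεindep : iIndepFun ε μ)
    (hεX : IndepFun (fun ω k => ε k ω) (fun ω k => X k ω) μ) :
    ∫ ω, (⨆ i, (1 / (n:ℝ)) * ∑ k, (f i (X k ω)) ^ 2) ∂μ
      ≤ σ ^ 2 + 8 * (∫ ω, (⨆ i, |∑ k, ε k ω * f i (X k ω)|) ∂μ) / n := by
  have hfabs : ∀ i x, |f i x| ≤ 1 := fun i x => abs_le.2 (hfb i x)
  have hrademacher : ∫ ω, ⨆ i, |∑ k, ε k ω * f i (X k ω)| ∂μ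
      = 𝔼 s, ∫ ω, ⨆ i, |signSum s fun k => f i (X k ω)| ∂μ :=
    integral_comp_rademacher hεm hεlaw hεindep (measurable_pi_lambda _ hXm) hεX
      (G := fun e x => ⨆ i, |∑ k, e k * f i (x k)|) (fun s => Measurable.iSup fun i => by fun_prop)
      fun s x => abs_ciSup_le fun i => by rw [abs_abs]; exact abs_signSum_le fun k => hfabs i (x k)
  calc _ ≤ σ ^ 2 + 2 * (1 / n) * 𝔼 s, ∫ ω, ⨆ i, |signSum s fun k => f i (X k ω) ^ 2| ∂μ :=
        integral_ciSup_mul_sum_le hXm hXindep (g := fun i x => f i x ^ 2)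
          (fun i => (hfm i).pow_const 2)
          (fun i x => by rw [abs_pow]; exact pow_le_one₀ (abs_nonneg _) (hfabs i x))
          (by positivity) hσ
    _ ≤ σ ^ 2 + 2 * (1 / n) * (4 * 𝔼 s, ∫ ω, ⨆ i, |signSum s fun k => f i (X k ω)| ∂μ) := by
        gcongr
        exact expect_integral_ciSup_abs_signSum_sq_le (fun i k => (hfm i).comp (hXm k))
          fun i k ω => hfabs i (X k ω)
    _ = _ := by rw [hrademacher]; ring

/-- Symmetrization plus contraction: if `sup_f (1/n) ∑ᵢ E[f²(Xᵢ)] ≤ σ²` for a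
countable class `F` of `[-1,1]`-valued functions, then
`E[sup_f (1/n) ∑ᵢ f²(Xᵢ)] ≤ σ² + 8 E[Z̄(F)]/n` where
`Z̄(F) = sup_f |∑ᵢ εᵢ f(Xᵢ)|`. -/
theorem stmt_15 {Ω 𝒳 : Type*} [MeasurableSpace Ω] [MeasurableSpace 𝒳]
    (μ : Measure Ω) [IsProbabilityMeasure μ]
    (n : ℕ) (hn : 0 < n) (X : Fin n → Ω → 𝒳) (hXm : ∀ i, Measurable (X i))
    (hXindep : iIndepFun X μ)
    {ι : Type*} [Countable ι] [Nonempty ι]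
    (f : ι → 𝒳 → ℝ) (hfm : ∀ i, Measurable (f i))
    (hfb : ∀ i x, f i x ∈ Set.Icc (-1:ℝ) 1)
    (σ : ℝ) (hσ : ∀ i, (1 / (n:ℝ)) * ∑ k, ∫ ω, (f i (X k ω)) ^ 2 ∂μ ≤ σ ^ 2)
    (ε : Fin n → Ω → ℝ) (hεm : ∀ k, Measurable (ε k))
    (hεlaw : ∀ k, μ {ω | ε k ω = 1} = 1/2 ∧ μ {ω | ε k ω = -1} = 1/2)
    (hεindep : iIndepFun ε μ)
    (hεX : IndepFun (fun ω k => ε k ω) (fun ω k => X k ω) μ) :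
    ∫ ω, (⨆ i, (1 / (n:ℝ)) * ∑ k, (f i (X k ω)) ^ 2) ∂μ
      ≤ σ ^ 2 + 8 * (∫ ω, (⨆ i, |∑ k, ε k ω * f i (X k ω)|) ∂μ) / n :=
  stmt_15_general μ n X hXm hXindep f hfm hfb σ hσ ε hεm hεlaw hεindep hεX
end
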